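/- Let R be a commutative ring, n ≥ 2, and let ψ_n denote the standard symplectic 2n×2n matrix. Then the subgroup E_{ψ_n}(R) of E_{2n-1}(R) generated by all α_{ψ_n}(v) and β_{ψ_n}(v) for v ∈ R^{2n-1} equals E_{2n-1}(R). In particular, every elementary generator E_{1j}(a) and E_{i1}(a) of E_{2n-1}(R) equals some α_{ψ_n}(±a·e_k) or β_{ψ_n}(±a·e_k). -/

import Mathlib

open Matrix

/-- A matrix is alternating: skew-symmetric with zero diagonal. -/
def IsAlternatingM {ι R : Type*} [CommRing R] (A : Matrix ι ι R) : Prop :=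
  Aᵀ = -A ∧ ∀ i, A i i = 0

/-- The elementary group `E_k(R)`. -/
def ElemGroup (k : ℕ) (R : Type*) [CommRing R] : Subgroup (Matrix (Fin k) (Fin k) R)ˣ :=
  Subgroup.closure {u | ∃ (i j : Fin k) (a : R), i ≠ j ∧
    (u : Matrix (Fin k) (Fin k) R) = 1 + Matrix.single i j a}

/-- The group `E_k(I)` generated by elementary matrices with parameter in `I`. -/
def ElemIdealGroup (k : ℕ) (R : Type*) [CommRing R] (I : Ideal R) :
    Subgroup (Matrix (Fin k) (Fin k) R)ˣ :=
  Subgroup.closure {u | ∃ (i j : Fin k) (a : R), i ≠ j ∧ a ∈ I ∧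
    (u : Matrix (Fin k) (Fin k) R) = 1 + Matrix.single i j a}

/-- The relative elementary group `E_k(R, I)`: normal closure of `E_k(I)` in `E_k(R)`. -/
def ElemRelGroup (k : ℕ) (R : Type*) [CommRing R] (I : Ideal R) :
    Subgroup (Matrix (Fin k) (Fin k) R)ˣ :=
  Subgroup.closure {u | ∃ g ∈ ElemGroup k R, ∃ e ∈ ElemIdealGroup k R I, u = g * e * g⁻¹}

/-- `α_φ(v) = I + dᵀ v ν`, where `φ = [[0,-c],[cᵀ,ν]]`, `φ⁻¹ = [[0,d],[-dᵀ,μ]]`. -/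
noncomputable def alphaM {m : ℕ} {R : Type*} [CommRing R]
    (φ : Matrix (Fin 1 ⊕ Fin m) (Fin 1 ⊕ Fin m) R) (v : Matrix (Fin 1) (Fin m) R) :
    Matrix (Fin m) (Fin m) R :=
  1 + (φ⁻¹.toBlocks₁₂)ᵀ * v * φ.toBlocks₂₂

/-- `β_φ(v) = I + μ vᵀ c`. -/
noncomputable def betaM {m : ℕ} {R : Type*} [CommRing R]
    (φ : Matrix (Fin 1 ⊕ Fin m) (Fin 1 ⊕ Fin m) R) (v : Matrix (Fin 1) (Fin m) R) :
    Matrix (Fin m) (Fin m) R :=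
  1 + φ⁻¹.toBlocks₂₂ * vᵀ * (-φ.toBlocks₁₂)

/-- The group `E_φ(R)` generated by the `α_φ(v)` and `β_φ(v)`. -/
def EphiGroup {m : ℕ} {R : Type*} [CommRing R]
    (φ : Matrix (Fin 1 ⊕ Fin m) (Fin 1 ⊕ Fin m) R) : Subgroup (Matrix (Fin m) (Fin m) R)ˣ :=
  Subgroup.closure {u | ∃ v, (u : Matrix (Fin m) (Fin m) R) = alphaM φ v ∨
    (u : Matrix (Fin m) (Fin m) R) = betaM φ v}

/-- `E_φ(I)`. -/
def EphiIdealGroup {m : ℕ} {R : Type*} [CommRing R]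
    (φ : Matrix (Fin 1 ⊕ Fin m) (Fin 1 ⊕ Fin m) R) (I : Ideal R) :
    Subgroup (Matrix (Fin m) (Fin m) R)ˣ :=
  Subgroup.closure {u | ∃ v, (∀ j, v 0 j ∈ I) ∧ ((u : Matrix (Fin m) (Fin m) R) = alphaM φ v ∨
    (u : Matrix (Fin m) (Fin m) R) = betaM φ v)}

/-- `E_φ(R, I)`: normal closure of `E_φ(I)` in `E_φ(R)`. -/
def EphiRelGroup {m : ℕ} {R : Type*} [CommRing R]
    (φ : Matrix (Fin 1 ⊕ Fin m) (Fin 1 ⊕ Fin m) R) (I : Ideal R) :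
    Subgroup (Matrix (Fin m) (Fin m) R)ˣ :=
  Subgroup.closure {u | ∃ g ∈ EphiGroup φ, ∃ e ∈ EphiIdealGroup φ I, u = g * e * g⁻¹}

/-- `1 ⊥ ε = diag(1, ε)`. -/
def onePerp {m : ℕ} {R : Type*} [CommRing R] (ε : Matrix (Fin m) (Fin m) R) :
    Matrix (Fin 1 ⊕ Fin m) (Fin 1 ⊕ Fin m) R :=
  Matrix.fromBlocks 1 0 0 ε

/-- The standard symplectic matrix `ψ_n` of size `2n`. -/
def psiMat (n : ℕ) (R : Type*) [CommRing R] : Matrix (Fin (2*n)) (Fin (2*n)) R :=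
  Matrix.of fun i j =>
    if i.val % 2 = 0 ∧ j.val = i.val + 1 then 1
    else if i.val % 2 = 1 ∧ i.val = j.val + 1 then -1 else 0

def sumEquiv (n : ℕ) (h : 1 ≤ n) : (Fin 1 ⊕ Fin (2*n-1)) ≃ Fin (2*n) :=
  finSumFinEquiv.trans (finCongr (by omega))

/-- `ψ_n` viewed with the `1 ⊕ (2n-1)` block indexing. -/
def psiB (n : ℕ) (h : 1 ≤ n) (R : Type*) [CommRing R] :
    Matrix (Fin 1 ⊕ Fin (2*n-1)) (Fin 1 ⊕ Fin (2*n-1)) R :=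
  (psiMat n R).submatrix (sumEquiv n h) (sumEquiv n h)

/-- `1 ⊥ ρ` reindexed to size `2n`. -/
def onePerpBig {n : ℕ} (h : 1 ≤ n) {R : Type*} [CommRing R]
    (ρ : Matrix (Fin (2*n-1)) (Fin (2*n-1)) R) : Matrix (Fin (2*n)) (Fin (2*n)) R :=
  (onePerp ρ).submatrix (sumEquiv n h).symm (sumEquiv n h).symm

/-- The Pfaffian, defined by expansion along the first row. -/
def pfaffian {R : Type*} [CommRing R] : (n : ℕ) → Matrix (Fin (2*n)) (Fin (2*n)) R → R
  | 0, _ => 1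
  | n+1, A => ∑ j : Fin (2*n+1),
      (-1:R)^(j:ℕ) * A ⟨0, by omega⟩ (Fin.cast (by omega) j.succ) *
      pfaffian n (A.submatrix (fun k => Fin.cast (by omega) (Fin.succ (j.succAbove k)))
        (fun k => Fin.cast (by omega) (Fin.succ (j.succAbove k))))

/-- The permutation σ swapping `2i ↔ 2i+1` (0-indexed). -/
def sigmaP {n : ℕ} (i : Fin (2*n)) : Fin (2*n) :=
  ⟨if i.val % 2 = 0 then i.val + 1 else i.val - 1, by have := i.isLt; split <;> omega⟩

/-- Elementary symplectic generator `se_{ij}(z)`. -/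
def seMat {n : ℕ} {R : Type*} [CommRing R] (i j : Fin (2*n)) (z : R) :
    Matrix (Fin (2*n)) (Fin (2*n)) R :=
  if i = sigmaP j then 1 + Matrix.single i j z
  else 1 + Matrix.single i j z
       - Matrix.single (sigmaP j) (sigmaP i) ((-1:R)^((i:ℕ)+(j:ℕ)) * z)

/-- The elementary symplectic group `ESp_{2n}(R)`. -/
def ESpGroup (n : ℕ) (R : Type*) [CommRing R] : Subgroup (Matrix (Fin (2*n)) (Fin (2*n)) R)ˣ :=
  Subgroup.closure {u | ∃ (i j : Fin (2*n)) (z : R), i ≠ j ∧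
    (u : Matrix (Fin (2*n)) (Fin (2*n)) R) = seMat i j z}

section Stmt7Aux

variable {R : Type*} [CommRing R] {n : ℕ}

/-! ### Entry-level description of `ψ` -/

def psiE (R : Type*) [CommRing R] (i j : ℕ) : R :=
  if i % 2 = 0 ∧ j = i + 1 then 1 else if i % 2 = 1 ∧ i = j + 1 then -1 else 0

lemma psiMat_apply (i j : Fin (2*n)) : psiMat n R i j = psiE R i.val j.val := rfl

def sigP (i : ℕ) : ℕ := if i % 2 = 0 then i + 1 else i - 1

lemma psiE_even {i j : ℕ} (h : i % 2 = 0) : psiE R i j = if j = i + 1 then 1 else 0 := by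
  unfold psiE; split_ifs <;> first | omega | rfl

lemma psiE_odd {i j : ℕ} (h : i % 2 = 1) : psiE R i j = if i = j + 1 then -1 else 0 := by
  unfold psiE; split_ifs <;> first | omega | rfl

lemma psiE_eq_zero {i k : ℕ} (hk : k ≠ sigP i) : psiE R i k = 0 := by
  rcases Nat.even_or_odd i with he | ho
  · have h0 : i % 2 = 0 := Nat.even_iff.mp he
    have : sigP i = i + 1 := by unfold sigP; rw [if_pos h0]
    rw [this] at hk
    rw [psiE_even h0, if_neg hk]
  · have h1 : i % 2 = 1 := Nat.odd_iff.mp ho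
    have : sigP i = i - 1 := by unfold sigP; rw [if_neg (by omega)]
    rw [this] at hk
    rw [psiE_odd h1, if_neg (by omega)]

lemma psiE_sig_mul (i j : ℕ) :
    psiE R i (sigP i) * psiE R (sigP i) j = if i = j then -1 else 0 := by
  rcases Nat.even_or_odd i with he | ho
  · have h0 : i % 2 = 0 := Nat.even_iff.mp he
    have hsig : sigP i = i + 1 := by unfold sigP; rw [if_pos h0]
    rw [hsig, psiE_even h0, psiE_odd (by omega), if_pos rfl, one_mul]
    split_ifs <;> first | omega | rfl
  · have h1 : i % 2 = 1 := Nat.odd_iff.mp ho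
    have hsig : sigP i = i - 1 := by unfold sigP; rw [if_neg (by omega)]
    have hii : i - 1 + 1 = i := by omega
    rw [hsig, psiE_odd h1, psiE_even (by omega), if_pos (by omega), hii]
    split_ifs <;> try ring
    all_goals omega

lemma psi_mul : psiMat n R * psiMat n R = -1 := by
  ext i j
  rw [Matrix.mul_apply]
  have hs : sigP i.val < 2*n := by have := i.isLt; unfold sigP; split <;> omega
  rw [Finset.sum_eq_single_of_mem (⟨sigP i.val, hs⟩ : Fin (2*n)) (Finset.mem_univ _)]
  · rw [psiMat_apply, psiMat_apply]
    simp only [Matrix.neg_apply, Matrix.one_apply]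
    show psiE R i.val (sigP i.val) * psiE R (sigP i.val) j.val = _
    rw [psiE_sig_mul]
    simp only [Fin.val_eq_val]
    split_ifs <;> ring
  · intro b _ hb
    rw [psiMat_apply, psiE_eq_zero (fun hc => hb (Fin.ext hc)), zero_mul]

lemma psiB_mul (h : 1 ≤ n) : psiB n h R * psiB n h R = -1 := by
  rw [psiB, Matrix.submatrix_mul_equiv, psi_mul]
  ext x y
  simp [Matrix.submatrix_apply, Matrix.one_apply, EmbeddingLike.apply_eq_iff_eq]

lemma psiB_inv (h : 1 ≤ n) : (psiB n h R)⁻¹ = -psiB n h R := by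
  apply Matrix.inv_eq_right_inv
  rw [Matrix.mul_neg, psiB_mul, neg_neg]

/-! ### Blocks of `ψ` -/

def nuE (R : Type*) [CommRing R] (k l : ℕ) : R :=
  if k % 2 = 1 ∧ l = k + 1 then 1 else if k % 2 = 0 ∧ k = l + 1 then -1 else 0

lemma nuE_left_zero (l : ℕ) : nuE R 0 l = 0 := by
  unfold nuE
  rw [if_neg (by rintro ⟨h1, h2⟩; omega), if_neg (by rintro ⟨h1, h2⟩; omega)]

lemma nuE_right_zero (k : ℕ) : nuE R k 0 = 0 := by
  unfold nuE
  rw [if_neg (by rintro ⟨h1, h2⟩; omega), if_neg (by rintro ⟨h1, h2⟩; omega)]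

lemma sumEquiv_val_inl (h : 1 ≤ n) (i : Fin 1) : ((sumEquiv n h (Sum.inl i)) : ℕ) = 0 := by
  have := i.isLt
  simp [sumEquiv]

lemma sumEquiv_val_inr (h : 1 ≤ n) (k : Fin (2*n-1)) :
    ((sumEquiv n h (Sum.inr k)) : ℕ) = 1 + k := by
  simp [sumEquiv]

lemma psiB_apply_inl_inr (h : 1 ≤ n) (i : Fin 1) (j : Fin (2*n-1)) :
    psiB n h R (Sum.inl i) (Sum.inr j) = if (j:ℕ) = 0 then 1 else 0 := by
  rw [psiB, Matrix.submatrix_apply, psiMat_apply, sumEquiv_val_inl, sumEquiv_val_inr,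
    psiE_even (by norm_num)]
  split_ifs <;> first | omega | rfl

lemma psiB_apply_inr_inr (h : 1 ≤ n) (k l : Fin (2*n-1)) :
    psiB n h R (Sum.inr k) (Sum.inr l) = nuE R k l := by
  rw [psiB, Matrix.submatrix_apply, psiMat_apply, sumEquiv_val_inr, sumEquiv_val_inr]
  unfold psiE nuE
  split_ifs <;> first | omega | rfl

lemma toBlocks₁₂_psiB (h : 1 ≤ n) :
    (psiB n h R).toBlocks₁₂ = Matrix.of fun (_ : Fin 1) (j : Fin (2*n-1)) =>
      if (j:ℕ) = 0 then (1:R) else 0 := by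
  ext i j
  rw [toBlocks₁₂, Matrix.of_apply, Matrix.of_apply, psiB_apply_inl_inr]

lemma toBlocks₂₂_psiB (h : 1 ≤ n) (k l : Fin (2*n-1)) :
    (psiB n h R).toBlocks₂₂ k l = nuE R k l := psiB_apply_inr_inr h k l

lemma dBlock (h : 1 ≤ n) :
    ((psiB n h R)⁻¹).toBlocks₁₂ = Matrix.of fun (_ : Fin 1) (j : Fin (2*n-1)) =>
      if (j:ℕ) = 0 then (-1:R) else 0 := by
  ext i j
  rw [psiB_inv]
  show -(psiB n h R (Sum.inl i) (Sum.inr j)) = _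
  rw [psiB_apply_inl_inr, Matrix.of_apply]
  split_ifs <;> simp

lemma muBlock (h : 1 ≤ n) (k l : Fin (2*n-1)) :
    ((psiB n h R)⁻¹).toBlocks₂₂ k l = -nuE R k l := by
  rw [psiB_inv]
  show -(psiB n h R (Sum.inr k) (Sum.inr l)) = _
  rw [psiB_apply_inr_inr]

/-! ### Entries of `α` and `β` -/

lemma alphaM_psiB_apply (h : 1 ≤ n) (v : Matrix (Fin 1) (Fin (2*n-1)) R)
    (i l : Fin (2*n-1)) :
    alphaM (psiB n h R) v i l
      = (if i = l then 1 else 0)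
        + (if (i:ℕ) = 0 then -(∑ j : Fin (2*n-1), v 0 j * nuE R (j:ℕ) (l:ℕ)) else 0) := by
  rw [alphaM, Matrix.add_apply, Matrix.one_apply]
  congr 1
  rw [Matrix.mul_apply]
  have hterm : ∀ j : Fin (2*n-1), ((((psiB n h R)⁻¹).toBlocks₁₂)ᵀ * v) i j *
      (psiB n h R).toBlocks₂₂ j l
      = (if (i:ℕ) = 0 then -1 else 0) * (v 0 j * nuE R (j:ℕ) (l:ℕ)) := by
    intro j
    rw [Matrix.mul_apply, Fin.sum_univ_one, toBlocks₂₂_psiB h, dBlock h]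
    show (if (i:ℕ) = 0 then (-1:R) else 0) * v 0 j * _ = _
    ring
  rw [Finset.sum_congr rfl (fun j _ => hterm j), ← Finset.mul_sum]
  split_ifs <;> ring

lemma betaM_psiB_apply (h : 1 ≤ n) (v : Matrix (Fin 1) (Fin (2*n-1)) R)
    (i l : Fin (2*n-1)) :
    betaM (psiB n h R) v i l
      = (if i = l then 1 else 0)
        + (if (l:ℕ) = 0 then (∑ j : Fin (2*n-1), nuE R (i:ℕ) (j:ℕ) * v 0 j) else 0) := by
  rw [betaM, Matrix.add_apply, Matrix.one_apply]
  congr 1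
  rw [Matrix.mul_apply, Fin.sum_univ_one]
  rw [Matrix.mul_apply]
  have hterm : ∀ j : Fin (2*n-1),
      ((psiB n h R)⁻¹).toBlocks₂₂ i j * vᵀ j 0 = -(nuE R (i:ℕ) (j:ℕ) * v 0 j) := by
    intro j
    rw [muBlock h]
    show -(nuE R (i:ℕ) (j:ℕ)) * v 0 j = _
    ring
  rw [Finset.sum_congr rfl (fun j _ => hterm j), Matrix.neg_apply]
  have hc : (psiB n h R).toBlocks₁₂ 0 l = if (l:ℕ) = 0 then 1 else 0 := by
    rw [toBlocks₁₂_psiB h]; rfl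
  rw [hc, Finset.sum_neg_distrib]
  split_ifs <;> ring

/-! ### `α`, `β` on standard basis rows -/

lemma sum_std_mul (k : Fin (2*n-1)) (a : R) (f : Fin (2*n-1) → R) :
    (∑ j : Fin (2*n-1), Matrix.single (0 : Fin 1) k a 0 j * f j) = a * f k := by
  rw [Finset.sum_eq_single k]
  · rw [Matrix.single_apply_same]
  · intro b _ hb
    have hz : Matrix.single (0 : Fin 1) k a 0 b = 0 := by
      simp only [Matrix.single, Matrix.of_apply]
      rw [if_neg (fun hc => hb hc.2.symm)]
    rw [hz, zero_mul]
  · intro hk; exact absurd (Finset.mem_univ k) hk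

lemma sum_mul_std (k : Fin (2*n-1)) (a : R) (f : Fin (2*n-1) → R) :
    (∑ j : Fin (2*n-1), f j * Matrix.single (0 : Fin 1) k a 0 j) = f k * a := by
  rw [Finset.sum_eq_single k]
  · rw [Matrix.single_apply_same]
  · intro b _ hb
    have hz : Matrix.single (0 : Fin 1) k a 0 b = 0 := by
      simp only [Matrix.single, Matrix.of_apply]
      rw [if_neg (fun hc => hb hc.2.symm)]
    rw [hz, mul_zero]
  · intro hk; exact absurd (Finset.mem_univ k) hk

lemma alphaM_single (h : 1 ≤ n) (k : Fin (2*n-1)) (a : R) (i l : Fin (2*n-1)) :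
    alphaM (psiB n h R) (Matrix.single 0 k a) i l
      = (if i = l then 1 else 0)
        + (if (i:ℕ) = 0 then -(a * nuE R (k:ℕ) (l:ℕ)) else 0) := by
  rw [alphaM_psiB_apply h, sum_std_mul]

lemma betaM_single (h : 1 ≤ n) (k : Fin (2*n-1)) (a : R) (i l : Fin (2*n-1)) :
    betaM (psiB n h R) (Matrix.single 0 k a) i l
      = (if i = l then 1 else 0)
        + (if (l:ℕ) = 0 then nuE R (i:ℕ) (k:ℕ) * a else 0) := by
  rw [betaM_psiB_apply h, sum_mul_std]

lemma alpha_zero (h : 1 ≤ n) (k : Fin (2*n-1)) (hk : (k:ℕ) = 0) (a : R) :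
    alphaM (psiB n h R) (Matrix.single 0 k a) = 1 := by
  ext i l
  rw [alphaM_single h, Matrix.one_apply]
  have hz : nuE R (k:ℕ) (l:ℕ) = 0 := by rw [hk]; exact nuE_left_zero _
  rw [hz]
  split_ifs <;> ring

lemma beta_zero (h : 1 ≤ n) (k : Fin (2*n-1)) (hk : (k:ℕ) = 0) (a : R) :
    betaM (psiB n h R) (Matrix.single 0 k a) = 1 := by
  ext i l
  rw [betaM_single h, Matrix.one_apply]
  have hz : nuE R (i:ℕ) (k:ℕ) = 0 := by rw [hk]; exact nuE_right_zero _
  rw [hz]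
  split_ifs <;> ring

lemma alpha_even (h : 1 ≤ n) (k j z : Fin (2*n-1)) (hz : (z:ℕ) = 0)
    (hk : (k:ℕ) % 2 = 0) (hkj : (k:ℕ) = (j:ℕ) + 1) (a : R) :
    alphaM (psiB n h R) (Matrix.single 0 k a)
      = 1 + Matrix.single z j a := by
  ext i l
  rw [alphaM_single h, Matrix.add_apply, Matrix.one_apply]
  congr 1
  show _ = Matrix.single z j a i l
  unfold nuE Matrix.single
  rw [Matrix.of_apply]
  simp only [Fin.ext_iff]
  split_ifs <;> first | omega | ring

lemma alpha_odd (h : 1 ≤ n) (k j z : Fin (2*n-1)) (hz : (z:ℕ) = 0)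
    (hk : (k:ℕ) % 2 = 1) (hkj : (j:ℕ) = (k:ℕ) + 1) (a : R) :
    alphaM (psiB n h R) (Matrix.single 0 k (-a))
      = 1 + Matrix.single z j a := by
  ext i l
  rw [alphaM_single h, Matrix.add_apply, Matrix.one_apply]
  congr 1
  show _ = Matrix.single z j a i l
  unfold nuE Matrix.single
  rw [Matrix.of_apply]
  simp only [Fin.ext_iff]
  split_ifs <;> first | omega | ring

lemma beta_even (h : 1 ≤ n) (k i z : Fin (2*n-1)) (hz : (z:ℕ) = 0)
    (hk : (k:ℕ) % 2 = 0) (hki : (k:ℕ) = (i:ℕ) + 1) (a : R) :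
    betaM (psiB n h R) (Matrix.single 0 k a)
      = 1 + Matrix.single i z a := by
  ext i' l
  rw [betaM_single h, Matrix.add_apply, Matrix.one_apply]
  congr 1
  show _ = Matrix.single i z a i' l
  unfold nuE Matrix.single
  rw [Matrix.of_apply]
  simp only [Fin.ext_iff]
  split_ifs <;> first | omega | ring

lemma beta_odd (h : 1 ≤ n) (k i z : Fin (2*n-1)) (hz : (z:ℕ) = 0)
    (hk : (k:ℕ) % 2 = 1) (hik : (i:ℕ) = (k:ℕ) + 1) (a : R) :
    betaM (psiB n h R) (Matrix.single 0 k (-a))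
      = 1 + Matrix.single i z a := by
  ext i' l
  rw [betaM_single h, Matrix.add_apply, Matrix.one_apply]
  congr 1
  show _ = Matrix.single i z a i' l
  unfold nuE Matrix.single
  rw [Matrix.of_apply]
  simp only [Fin.ext_iff]
  split_ifs <;> first | omega | ring

end Stmt7Aux
section Stmt7Group

variable {R : Type*} [CommRing R] {n : ℕ}

lemma stdBM_neg {N : Type*} [Fintype N] [DecidableEq N] (i j : N) (a : R) :
    Matrix.single i j (-a) = -Matrix.single i j a := by
  ext i' j'
  simp only [Matrix.single, Matrix.of_apply, Matrix.neg_apply]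
  split_ifs <;> simp

lemma stdBM_mul_same {N : Type*} [Fintype N] [DecidableEq N] (i j k : N) (a b : R) :
    Matrix.single i j a * Matrix.single j k b
      = Matrix.single i k (a * b) :=
  Matrix.single_mul_single_same (c := a) i j k b

lemma stdBM_mul_ne {N : Type*} [Fintype N] [DecidableEq N] {j k : N} (i l : N)
    (h : j ≠ k) (a b : R) :
    Matrix.single i j a * Matrix.single k l b = 0 :=
  Matrix.single_mul_single_of_ne (c := a) i j k h b

/-- The commutator identity for elementary matrices. -/
lemma commId {N : Type*} [Fintype N] [DecidableEq N] (i j z : N)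
    (hij : i ≠ j) (hiz : i ≠ z) (hzj : z ≠ j) (a : R) :
    (1 + Matrix.single i z a) * (1 + Matrix.single z j 1) *
      (1 + Matrix.single i z (-a)) * (1 + Matrix.single z j (-1))
    = 1 + Matrix.single i j a := by
  set A := Matrix.single i z a with hA
  set B := Matrix.single z j (1:R) with hB
  set C := Matrix.single i j a with hC
  have hAB : A * B = C := by rw [hA, hB, hC, stdBM_mul_same, mul_one]
  have hBA : B * A = 0 := stdBM_mul_ne _ _ hij.symm _ _
  have hAA : A * A = 0 := stdBM_mul_ne _ _ hiz.symm _ _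
  have hBB : B * B = 0 := stdBM_mul_ne _ _ hzj.symm _ _
  have hCA : C * A = 0 := stdBM_mul_ne _ _ hij.symm _ _
  have hCB : C * B = 0 := stdBM_mul_ne _ _ hzj.symm _ _
  have hAC : A * C = 0 := stdBM_mul_ne _ _ hiz.symm _ _
  have hBC : B * C = 0 := stdBM_mul_ne _ _ hij.symm _ _
  have hCC : C * C = 0 := stdBM_mul_ne _ _ hij.symm _ _
  rw [stdBM_neg, stdBM_neg, ← hA, ← hB]
  simp only [mul_add, add_mul, one_mul, mul_one, mul_neg, neg_mul, neg_neg,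
    hAB, hBA, hAA, hBB, hCA, hCB, hAC, hBC, hCC,
    neg_zero, add_zero, zero_add, mul_zero, zero_mul]
  abel

/-! ### Additivity of `α` and `β` for `ψ` -/

lemma nu_d_zero (h : 1 ≤ n) :
    (psiB n h R).toBlocks₂₂ * (((psiB n h R)⁻¹).toBlocks₁₂)ᵀ = 0 := by
  ext k x
  rw [Matrix.mul_apply, Matrix.zero_apply]
  apply Finset.sum_eq_zero
  intro l _
  rw [Matrix.transpose_apply, toBlocks₂₂_psiB h, dBlock h, Matrix.of_apply]
  split_ifs with hl
  · have hz : nuE R (k:ℕ) (l:ℕ) = 0 := by rw [hl]; exact nuE_right_zero _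
    rw [hz, zero_mul]
  · rw [mul_zero]

lemma c_mu_zero (h : 1 ≤ n) :
    (-(psiB n h R).toBlocks₁₂) * ((psiB n h R)⁻¹).toBlocks₂₂ = 0 := by
  ext x l
  rw [Matrix.mul_apply, Matrix.zero_apply]
  apply Finset.sum_eq_zero
  intro j _
  rw [Matrix.neg_apply, muBlock h, toBlocks₁₂_psiB h, Matrix.of_apply]
  split_ifs with hj
  · have hz : nuE R (j:ℕ) (l:ℕ) = 0 := by rw [hj]; exact nuE_left_zero _
    rw [hz]; ring
  · ring

lemma alphaM_psiB_zero (h : 1 ≤ n) : alphaM (psiB n h R) 0 = (1 : Matrix (Fin (2*n-1)) (Fin (2*n-1)) R) := by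
  rw [alphaM, Matrix.mul_zero, Matrix.zero_mul, add_zero]

lemma betaM_psiB_zero (h : 1 ≤ n) : betaM (psiB n h R) 0 = (1 : Matrix (Fin (2*n-1)) (Fin (2*n-1)) R) := by
  rw [betaM, Matrix.transpose_zero, Matrix.mul_zero, Matrix.zero_mul, add_zero]

lemma alphaM_psiB_add (h : 1 ≤ n) (v w : Matrix (Fin 1) (Fin (2*n-1)) R) :
    alphaM (psiB n h R) (v + w) = alphaM (psiB n h R) v * alphaM (psiB n h R) w := by
  have hDD : ((((psiB n h R)⁻¹).toBlocks₁₂)ᵀ * v * (psiB n h R).toBlocks₂₂) *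
      ((((psiB n h R)⁻¹).toBlocks₁₂)ᵀ * w * (psiB n h R).toBlocks₂₂) = 0 := by
    have e : ((((psiB n h R)⁻¹).toBlocks₁₂)ᵀ * v * (psiB n h R).toBlocks₂₂) *
        ((((psiB n h R)⁻¹).toBlocks₁₂)ᵀ * w * (psiB n h R).toBlocks₂₂)
        = (((psiB n h R)⁻¹).toBlocks₁₂)ᵀ * v *
          ((psiB n h R).toBlocks₂₂ * (((psiB n h R)⁻¹).toBlocks₁₂)ᵀ) *
          (w * (psiB n h R).toBlocks₂₂) := by
      simp only [Matrix.mul_assoc]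
    rw [e, nu_d_zero h, Matrix.mul_zero, Matrix.zero_mul]
  have expand : ∀ X Y : Matrix (Fin (2*n-1)) (Fin (2*n-1)) R,
      (1 + X) * (1 + Y) = 1 + (X + Y) + X * Y := by
    intro X Y; noncomm_ring
  rw [alphaM, alphaM, alphaM, expand, hDD, add_zero, Matrix.mul_add, Matrix.add_mul]

lemma betaM_psiB_add (h : 1 ≤ n) (v w : Matrix (Fin 1) (Fin (2*n-1)) R) :
    betaM (psiB n h R) (v + w) = betaM (psiB n h R) v * betaM (psiB n h R) w := by
  have hDD : (((psiB n h R)⁻¹).toBlocks₂₂ * vᵀ * (-(psiB n h R).toBlocks₁₂)) *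
      (((psiB n h R)⁻¹).toBlocks₂₂ * wᵀ * (-(psiB n h R).toBlocks₁₂)) = 0 := by
    have e : (((psiB n h R)⁻¹).toBlocks₂₂ * vᵀ * (-(psiB n h R).toBlocks₁₂)) *
        (((psiB n h R)⁻¹).toBlocks₂₂ * wᵀ * (-(psiB n h R).toBlocks₁₂))
        = ((psiB n h R)⁻¹).toBlocks₂₂ * vᵀ *
          ((-(psiB n h R).toBlocks₁₂) * ((psiB n h R)⁻¹).toBlocks₂₂) *
          (wᵀ * (-(psiB n h R).toBlocks₁₂)) := by
      simp only [Matrix.mul_assoc]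
    rw [e, c_mu_zero h, Matrix.mul_zero, Matrix.zero_mul]
  have expand : ∀ X Y : Matrix (Fin (2*n-1)) (Fin (2*n-1)) R,
      (1 + X) * (1 + Y) = 1 + (X + Y) + X * Y := by
    intro X Y; noncomm_ring
  rw [betaM, betaM, betaM, expand, hDD, add_zero, Matrix.transpose_add,
    Matrix.mul_add, Matrix.add_mul]

/-! ### Units -/

noncomputable def alphaU (h : 1 ≤ n) (v : Matrix (Fin 1) (Fin (2*n-1)) R) :
    (Matrix (Fin (2*n-1)) (Fin (2*n-1)) R)ˣ :=
  ⟨alphaM (psiB n h R) v, alphaM (psiB n h R) (-v),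
    by rw [← alphaM_psiB_add h, add_neg_cancel, alphaM_psiB_zero h],
    by rw [← alphaM_psiB_add h, neg_add_cancel, alphaM_psiB_zero h]⟩

noncomputable def betaU (h : 1 ≤ n) (v : Matrix (Fin 1) (Fin (2*n-1)) R) :
    (Matrix (Fin (2*n-1)) (Fin (2*n-1)) R)ˣ :=
  ⟨betaM (psiB n h R) v, betaM (psiB n h R) (-v),
    by rw [← betaM_psiB_add h, add_neg_cancel, betaM_psiB_zero h],
    by rw [← betaM_psiB_add h, neg_add_cancel, betaM_psiB_zero h]⟩

lemma elem_mul {N : Type*} [Fintype N] [DecidableEq N] {i j : N} (hij : i ≠ j) (a b : R) :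
    (1 + Matrix.single i j a) * (1 + Matrix.single i j b)
      = 1 + Matrix.single i j (a + b) := by
  have hz : Matrix.single i j a * Matrix.single i j b = 0 :=
    stdBM_mul_ne _ _ hij.symm _ _
  rw [mul_add, mul_one, add_mul, one_mul, hz, add_zero, Matrix.single_add]
  abel

def elemU {N : Type*} [Fintype N] [DecidableEq N] (i j : N) (a : R) (hij : i ≠ j) :
    (Matrix N N R)ˣ :=
  ⟨1 + Matrix.single i j a, 1 + Matrix.single i j (-a),
    by rw [elem_mul hij, add_neg_cancel, Matrix.single_zero, add_zero],
    by rw [elem_mul hij, neg_add_cancel, Matrix.single_zero, add_zero]⟩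

lemma elemU_mem (k : ℕ) (i j : Fin k) (a : R) (hij : i ≠ j) :
    elemU i j a hij ∈ ElemGroup k R :=
  Subgroup.subset_closure ⟨i, j, a, hij, rfl⟩

lemma alphaU_mem (h : 1 ≤ n) (v : Matrix (Fin 1) (Fin (2*n-1)) R) :
    alphaU h v ∈ EphiGroup (psiB n h R) :=
  Subgroup.subset_closure ⟨v, Or.inl rfl⟩

lemma betaU_mem (h : 1 ≤ n) (v : Matrix (Fin 1) (Fin (2*n-1)) R) :
    betaU h v ∈ EphiGroup (psiB n h R) :=
  Subgroup.subset_closure ⟨v, Or.inr rfl⟩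

end Stmt7Group
section Stmt7Final

variable {R : Type*} [CommRing R] {n : ℕ}

lemma v_decomp (v : Matrix (Fin 1) (Fin (2*n-1)) R) :
    v = ∑ k : Fin (2*n-1), Matrix.single 0 k (v 0 k) := by
  calc v = ∑ i : Fin 1, ∑ j : Fin (2*n-1), Matrix.single i j (v i j) :=
        Matrix.matrix_eq_sum_single v
    _ = _ := Fin.sum_univ_one _

lemma alphaU_single_mem (h : 1 ≤ n) (k : Fin (2*n-1)) (b : R) :
    alphaU h (Matrix.single 0 k b) ∈ ElemGroup (2*n-1) R := by
  have hm : 0 < 2*n-1 := by omega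
  rcases Nat.eq_zero_or_pos (k:ℕ) with hk | hkpos
  · have he : alphaU h (Matrix.single 0 k b) = 1 := Units.ext (alpha_zero h k hk b)
    rw [he]; exact one_mem _
  · rcases Nat.even_or_odd (k:ℕ) with he | ho
    · have hke : (k:ℕ) % 2 = 0 := Nat.even_iff.mp he
      have hj : (k:ℕ) - 1 < 2*n-1 := by omega
      have hne : (⟨0, hm⟩ : Fin (2*n-1)) ≠ ⟨(k:ℕ)-1, hj⟩ := by
        simp only [ne_eq, Fin.mk.injEq]; omega
      have he2 : alphaU h (Matrix.single 0 k b) = elemU ⟨0,hm⟩ ⟨(k:ℕ)-1,hj⟩ b hne :=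
        Units.ext (alpha_even h k ⟨(k:ℕ)-1,hj⟩ ⟨0,hm⟩ rfl hke
          (by show (k:ℕ) = (k:ℕ)-1+1; omega) b)
      rw [he2]; exact elemU_mem _ _ _ _ _
    · have hko : (k:ℕ) % 2 = 1 := Nat.odd_iff.mp ho
      have hj : (k:ℕ) + 1 < 2*n-1 := by omega
      have hne : (⟨0,hm⟩ : Fin (2*n-1)) ≠ ⟨(k:ℕ)+1,hj⟩ := by
        simp only [ne_eq, Fin.mk.injEq]; omega
      have he2 : alphaU h (Matrix.single 0 k b) = elemU ⟨0,hm⟩ ⟨(k:ℕ)+1,hj⟩ (-b) hne := by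
        apply Units.ext
        show alphaM (psiB n h R) (Matrix.single 0 k b)
            = 1 + Matrix.single (⟨0,hm⟩ : Fin (2*n-1)) ⟨(k:ℕ)+1,hj⟩ (-b)
        have := alpha_odd h k ⟨(k:ℕ)+1,hj⟩ ⟨0,hm⟩ rfl hko rfl (-b)
        rwa [neg_neg] at this
      rw [he2]; exact elemU_mem _ _ _ _ _

lemma betaU_single_mem (h : 1 ≤ n) (k : Fin (2*n-1)) (b : R) :
    betaU h (Matrix.single 0 k b) ∈ ElemGroup (2*n-1) R := by
  have hm : 0 < 2*n-1 := by omega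
  rcases Nat.eq_zero_or_pos (k:ℕ) with hk | hkpos
  · have he : betaU h (Matrix.single 0 k b) = 1 := Units.ext (beta_zero h k hk b)
    rw [he]; exact one_mem _
  · rcases Nat.even_or_odd (k:ℕ) with he | ho
    · have hke : (k:ℕ) % 2 = 0 := Nat.even_iff.mp he
      have hj : (k:ℕ) - 1 < 2*n-1 := by omega
      have hne : (⟨(k:ℕ)-1,hj⟩ : Fin (2*n-1)) ≠ ⟨0, hm⟩ := by
        simp only [ne_eq, Fin.mk.injEq]; omega
      have he2 : betaU h (Matrix.single 0 k b) = elemU ⟨(k:ℕ)-1,hj⟩ ⟨0,hm⟩ b hne :=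
        Units.ext (beta_even h k ⟨(k:ℕ)-1,hj⟩ ⟨0,hm⟩ rfl hke
          (by show (k:ℕ) = (k:ℕ)-1+1; omega) b)
      rw [he2]; exact elemU_mem _ _ _ _ _
    · have hko : (k:ℕ) % 2 = 1 := Nat.odd_iff.mp ho
      have hj : (k:ℕ) + 1 < 2*n-1 := by omega
      have hne : (⟨(k:ℕ)+1,hj⟩ : Fin (2*n-1)) ≠ ⟨0,hm⟩ := by
        simp only [ne_eq, Fin.mk.injEq]; omega
      have he2 : betaU h (Matrix.single 0 k b) = elemU ⟨(k:ℕ)+1,hj⟩ ⟨0,hm⟩ (-b) hne := by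
        apply Units.ext
        show betaM (psiB n h R) (Matrix.single 0 k b)
            = 1 + Matrix.single (⟨(k:ℕ)+1,hj⟩ : Fin (2*n-1)) ⟨0,hm⟩ (-b)
        have := beta_odd h k ⟨(k:ℕ)+1,hj⟩ ⟨0,hm⟩ rfl hko rfl (-b)
        rwa [neg_neg] at this
      rw [he2]; exact elemU_mem _ _ _ _ _

lemma alphaU_mem_elem (h : 1 ≤ n) (v : Matrix (Fin 1) (Fin (2*n-1)) R) :
    alphaU h v ∈ ElemGroup (2*n-1) R := by
  have key : ∀ s : Finset (Fin (2*n-1)),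
      alphaU h (∑ k ∈ s, Matrix.single 0 k (v 0 k)) ∈ ElemGroup (2*n-1) R := by
    intro s
    induction s using Finset.induction_on with
    | empty =>
        rw [Finset.sum_empty]
        have he : alphaU h (0 : Matrix (Fin 1) (Fin (2*n-1)) R) = 1 :=
          Units.ext (alphaM_psiB_zero h)
        rw [he]; exact one_mem _
    | @insert a s ha ih =>
        rw [Finset.sum_insert ha]
        have he : alphaU h (Matrix.single 0 a (v 0 a)
              + ∑ k ∈ s, Matrix.single 0 k (v 0 k))
            = alphaU h (Matrix.single 0 a (v 0 a))
              * alphaU h (∑ k ∈ s, Matrix.single 0 k (v 0 k)) :=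
          Units.ext (alphaM_psiB_add h _ _)
        rw [he]
        exact mul_mem (alphaU_single_mem h _ _) ih
  have h2 := key Finset.univ
  rwa [← v_decomp v] at h2

lemma betaU_mem_elem (h : 1 ≤ n) (v : Matrix (Fin 1) (Fin (2*n-1)) R) :
    betaU h v ∈ ElemGroup (2*n-1) R := by
  have key : ∀ s : Finset (Fin (2*n-1)),
      betaU h (∑ k ∈ s, Matrix.single 0 k (v 0 k)) ∈ ElemGroup (2*n-1) R := by
    intro s
    induction s using Finset.induction_on with
    | empty =>
        rw [Finset.sum_empty]
        have he : betaU h (0 : Matrix (Fin 1) (Fin (2*n-1)) R) = 1 :=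
          Units.ext (betaM_psiB_zero h)
        rw [he]; exact one_mem _
    | @insert a s ha ih =>
        rw [Finset.sum_insert ha]
        have he : betaU h (Matrix.single 0 a (v 0 a)
              + ∑ k ∈ s, Matrix.single 0 k (v 0 k))
            = betaU h (Matrix.single 0 a (v 0 a))
              * betaU h (∑ k ∈ s, Matrix.single 0 k (v 0 k)) :=
          Units.ext (betaM_psiB_add h _ _)
        rw [he]
        exact mul_mem (betaU_single_mem h _ _) ih
  have h2 := key Finset.univ
  rwa [← v_decomp v] at h2

lemma ephi_le_elem (h : 1 ≤ n) :
    EphiGroup (psiB n h R) ≤ ElemGroup (2*n-1) R := by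
  refine (Subgroup.closure_le _).mpr ?_
  rintro u ⟨v, hv | hv⟩
  · have he : u = alphaU h v := Units.ext hv
    exact he ▸ alphaU_mem_elem h v
  · have he : u = betaU h v := Units.ext hv
    exact he ▸ betaU_mem_elem h v

lemma row_mem (h : 1 ≤ n) (z j : Fin (2*n-1)) (hz : (z:ℕ) = 0) (hzj : z ≠ j) (a : R) :
    elemU z j a hzj ∈ EphiGroup (psiB n h R) := by
  have hjne : (j:ℕ) ≠ 0 := fun hc => hzj (Fin.ext (by omega))
  rcases Nat.even_or_odd (j:ℕ) with he | ho
  · have hje : (j:ℕ) % 2 = 0 := Nat.even_iff.mp he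
    have hk : (j:ℕ) - 1 < 2*n-1 := by omega
    have heq : elemU z j a hzj = alphaU h (Matrix.single 0 ⟨(j:ℕ)-1,hk⟩ (-a)) :=
      Units.ext (alpha_odd h ⟨(j:ℕ)-1,hk⟩ j z hz (by show ((j:ℕ)-1)%2 = 1; omega)
        (by show (j:ℕ) = (j:ℕ)-1+1; omega) a).symm
    rw [heq]; exact alphaU_mem h _
  · have hjo : (j:ℕ) % 2 = 1 := Nat.odd_iff.mp ho
    have hk : (j:ℕ) + 1 < 2*n-1 := by omega
    have heq : elemU z j a hzj = alphaU h (Matrix.single 0 ⟨(j:ℕ)+1,hk⟩ a) :=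
      Units.ext (alpha_even h ⟨(j:ℕ)+1,hk⟩ j z hz (by show ((j:ℕ)+1)%2 = 0; omega) rfl a).symm
    rw [heq]; exact alphaU_mem h _

lemma col_mem (h : 1 ≤ n) (i z : Fin (2*n-1)) (hz : (z:ℕ) = 0) (hiz : i ≠ z) (a : R) :
    elemU i z a hiz ∈ EphiGroup (psiB n h R) := by
  have hine : (i:ℕ) ≠ 0 := fun hc => hiz (Fin.ext (by omega))
  rcases Nat.even_or_odd (i:ℕ) with he | ho
  · have hie : (i:ℕ) % 2 = 0 := Nat.even_iff.mp he
    have hk : (i:ℕ) - 1 < 2*n-1 := by omega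
    have heq : elemU i z a hiz = betaU h (Matrix.single 0 ⟨(i:ℕ)-1,hk⟩ (-a)) :=
      Units.ext (beta_odd h ⟨(i:ℕ)-1,hk⟩ i z hz (by show ((i:ℕ)-1)%2 = 1; omega)
        (by show (i:ℕ) = (i:ℕ)-1+1; omega) a).symm
    rw [heq]; exact betaU_mem h _
  · have hio : (i:ℕ) % 2 = 1 := Nat.odd_iff.mp ho
    have hk : (i:ℕ) + 1 < 2*n-1 := by omega
    have heq : elemU i z a hiz = betaU h (Matrix.single 0 ⟨(i:ℕ)+1,hk⟩ a) :=
      Units.ext (beta_even h ⟨(i:ℕ)+1,hk⟩ i z hz (by show ((i:ℕ)+1)%2 = 0; omega) rfl a).symm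
    rw [heq]; exact betaU_mem h _

lemma elem_le_ephi (h : 1 ≤ n) :
    ElemGroup (2*n-1) R ≤ EphiGroup (psiB n h R) := by
  have hmem : ∀ (i j : Fin (2*n-1)) (hij : i ≠ j) (a : R),
      elemU i j a hij ∈ EphiGroup (psiB n h R) := by
    intro i j hij a
    by_cases hi : (i:ℕ) = 0
    · exact row_mem h i j hi hij a
    · by_cases hj : (j:ℕ) = 0
      · exact col_mem h i j hj hij a
      · have hm : 0 < 2*n-1 := by omega
        have hiz : i ≠ (⟨0, hm⟩ : Fin (2*n-1)) := fun hc => hi (by rw [hc])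
        have hzj : (⟨0, hm⟩ : Fin (2*n-1)) ≠ j := fun hc => hj (by rw [← hc])
        have hcomm : elemU i j a hij
            = elemU i ⟨0,hm⟩ a hiz * elemU ⟨0,hm⟩ j 1 hzj
              * (elemU i ⟨0,hm⟩ a hiz)⁻¹ * (elemU ⟨0,hm⟩ j 1 hzj)⁻¹ := by
          apply Units.ext
          show 1 + Matrix.single i j a
              = (1 + Matrix.single i ⟨0,hm⟩ a) * (1 + Matrix.single ⟨0,hm⟩ j 1)
                * (1 + Matrix.single i ⟨0,hm⟩ (-a))
                * (1 + Matrix.single ⟨0,hm⟩ j (-1))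
          exact (commId i j ⟨0,hm⟩ hij hiz hzj a).symm
        rw [hcomm]
        exact mul_mem (mul_mem (mul_mem (col_mem h i ⟨0,hm⟩ rfl hiz a)
          (row_mem h ⟨0,hm⟩ j rfl hzj 1))
          (inv_mem (col_mem h i ⟨0,hm⟩ rfl hiz a))) (inv_mem (row_mem h ⟨0,hm⟩ j rfl hzj 1))
  refine (Subgroup.closure_le _).mpr ?_
  rintro u ⟨i, j, a, hij, hu⟩
  have he : u = elemU i j a hij := Units.ext hu
  exact he ▸ hmem i j hij a

end Stmt7Final

/-- `E_{ψ_n}(R) = E_{2n-1}(R)`, and every generator `E_{1j}(a)`, `E_{i1}(a)`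
is some `α_{ψ_n}(±a e_k)` resp. `β_{ψ_n}(±a e_k)`. -/
theorem stmt7 {R : Type*} [CommRing R] (n : ℕ) (hn : 2 ≤ n) :
    EphiGroup (psiB n (le_trans one_le_two hn) R) = ElemGroup (2*n-1) R ∧
    (∀ (a : R) (j : Fin (2*n-1)), j ≠ ⟨0, by omega⟩ → ∃ k : Fin (2*n-1),
      (1 + Matrix.single (⟨0, by omega⟩ : Fin (2*n-1)) j a
          = alphaM (psiB n (le_trans one_le_two hn) R) (Matrix.single 0 k a)) ∨
      (1 + Matrix.single (⟨0, by omega⟩ : Fin (2*n-1)) j a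
          = alphaM (psiB n (le_trans one_le_two hn) R) (Matrix.single 0 k (-a)))) ∧
    (∀ (a : R) (i : Fin (2*n-1)), i ≠ ⟨0, by omega⟩ → ∃ k : Fin (2*n-1),
      (1 + Matrix.single i (⟨0, by omega⟩ : Fin (2*n-1)) a
          = betaM (psiB n (le_trans one_le_two hn) R) (Matrix.single 0 k a)) ∨
      (1 + Matrix.single i (⟨0, by omega⟩ : Fin (2*n-1)) a
          = betaM (psiB n (le_trans one_le_two hn) R) (Matrix.single 0 k (-a)))) := by
  have h : 1 ≤ n := le_trans one_le_two hn
  refine ⟨le_antisymm (ephi_le_elem h) (elem_le_ephi h), ?_, ?_⟩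
  · intro a j hj
    have hjne : (j:ℕ) ≠ 0 := fun hc => hj (Fin.ext hc)
    rcases Nat.even_or_odd (j:ℕ) with he | ho
    · have hje : (j:ℕ) % 2 = 0 := Nat.even_iff.mp he
      have hk : (j:ℕ) - 1 < 2*n-1 := by omega
      refine ⟨⟨(j:ℕ)-1, hk⟩, Or.inr ?_⟩
      exact (alpha_odd h ⟨(j:ℕ)-1,hk⟩ j ⟨0, by omega⟩ rfl
        (by show ((j:ℕ)-1)%2 = 1; omega) (by show (j:ℕ) = (j:ℕ)-1+1; omega) a).symm
    · have hjo : (j:ℕ) % 2 = 1 := Nat.odd_iff.mp ho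
      have hk : (j:ℕ) + 1 < 2*n-1 := by omega
      refine ⟨⟨(j:ℕ)+1, hk⟩, Or.inl ?_⟩
      exact (alpha_even h ⟨(j:ℕ)+1,hk⟩ j ⟨0, by omega⟩ rfl
        (by show ((j:ℕ)+1)%2 = 0; omega) rfl a).symm
  · intro a i hi
    have hine : (i:ℕ) ≠ 0 := fun hc => hi (Fin.ext hc)
    rcases Nat.even_or_odd (i:ℕ) with he | ho
    · have hie : (i:ℕ) % 2 = 0 := Nat.even_iff.mp he
      have hk : (i:ℕ) - 1 < 2*n-1 := by omega
      refine ⟨⟨(i:ℕ)-1, hk⟩, Or.inr ?_⟩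
      exact (beta_odd h ⟨(i:ℕ)-1,hk⟩ i ⟨0, by omega⟩ rfl
        (by show ((i:ℕ)-1)%2 = 1; omega) (by show (i:ℕ) = (i:ℕ)-1+1; omega) a).symm
    · have hio : (i:ℕ) % 2 = 1 := Nat.odd_iff.mp ho
      have hk : (i:ℕ) + 1 < 2*n-1 := by omega
      refine ⟨⟨(i:ℕ)+1, hk⟩, Or.inl ?_⟩
      exact (beta_even h ⟨(i:ℕ)+1,hk⟩ i ⟨0, by omega⟩ rfl
        (by show ((i:ℕ)+1)%2 = 0; omega) rfl a).symm
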